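/- Let V be symmetric positive definite, B ∈ R^m, 1 the all-ones vector, and let ω* be the minimizer of AMSE(ω) = (ωᵀB)² + ωᵀVω subject to ωᵀ1 = 1. Then the minimal value satisfies AMSE(ω*) = (1 + BᵀV⁻¹B) / [(1 + BᵀV⁻¹B)(1ᵀV⁻¹1) − (1ᵀV⁻¹B)²]. -/

import Mathlib

/-!
With `S = V⁻¹`, put `a = 1 + BᵀSB`, `b = 1ᵀSB`, `c = 1ᵀS1` and `D = ac - b²`, so that
`ω* = D⁻¹ (a S1 - b SB)`. Then `ω*ᵀB = b / D` and `Vω* = D⁻¹ (a 1 - b B)`, whence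
`ω*ᵀVω* = (a D - b²) / D²`; adding `(ω*ᵀB)² = b² / D²` leaves `a / D`. When `D = 0` both
sides vanish, since `0⁻¹ = 0`.
-/

open Matrix

namespace Matrix

lemma IsSymm.dotProduct_mulVec_comm {R n : Type*} [CommSemiring R] [Fintype n]
    {A : Matrix n n R} (hA : A.IsSymm) (x y : n → R) : x ⬝ᵥ A *ᵥ y = y ⬝ᵥ A *ᵥ x := by
  rw [dotProduct_mulVec, ← vecMul_transpose, hA.eq, dotProduct_comm]

lemma amse_optimal_weight_eq {K n : Type*} [Field K] [Fintype n] [DecidableEq n]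
    {V : Matrix n n K} (B : n → K) (hV : V.IsSymm) (hdet : IsUnit V.det) :
    let D := (1 + B ⬝ᵥ V⁻¹ *ᵥ B) * (1 ⬝ᵥ V⁻¹ *ᵥ 1) - (1 ⬝ᵥ V⁻¹ *ᵥ B) ^ 2
    let ω := D⁻¹ • ((1 + B ⬝ᵥ V⁻¹ *ᵥ B) • V⁻¹ *ᵥ 1 - (1 ⬝ᵥ V⁻¹ *ᵥ B) • V⁻¹ *ᵥ B)
    (ω ⬝ᵥ B) ^ 2 + ω ⬝ᵥ V *ᵥ ω = (1 + B ⬝ᵥ V⁻¹ *ᵥ B) / D := by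
  set u := V⁻¹ *ᵥ 1
  set w := V⁻¹ *ᵥ B
  set a := 1 + B ⬝ᵥ w with ha
  set b := 1 ⬝ᵥ w
  set c := 1 ⬝ᵥ u
  intro D ω
  have huB : u ⬝ᵥ B = b := by rw [dotProduct_comm, hV.inv.dotProduct_mulVec_comm]
  have hwB : w ⬝ᵥ B = a - 1 := by rw [ha, dotProduct_comm]; ring
  have hVinv (x : n → K) : V *ᵥ V⁻¹ *ᵥ x = x := by
    rw [mulVec_mulVec, mul_nonsing_inv V hdet, one_mulVec]
  have hωB : ω ⬝ᵥ B = D⁻¹ * b := by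
    simp only [ω, smul_dotProduct, sub_dotProduct, smul_eq_mul, huB, hwB]
    ring
  have hVω : V *ᵥ ω = D⁻¹ • (a • 1 - b • B) := by
    simp only [ω, mulVec_smul, mulVec_sub, u, w, hVinv]
  have hquad : ω ⬝ᵥ V *ᵥ ω = D⁻¹ * (D⁻¹ * (a * D - b ^ 2)) := by
    simp only [hVω, ω, smul_dotProduct, dotProduct_smul, sub_dotProduct, dotProduct_sub,
      smul_eq_mul, huB, hwB, dotProduct_comm u 1, dotProduct_comm w 1]
    simp only [D]
    ring
  rw [hωB, hquad]
  rcases eq_or_ne D 0 with hD | hD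
  · simp [hD]
  · field_simp
    ring

end Matrix

theorem stmt_2_general (m : ℕ) (V : Matrix (Fin m) (Fin m) ℝ) (hV : V.PosDef)
    (B : Fin m → ℝ) :
    let one : Fin m → ℝ := fun _ => 1
    let D : ℝ := (1 + B ⬝ᵥ V⁻¹.mulVec B) * (one ⬝ᵥ V⁻¹.mulVec one) - (one ⬝ᵥ V⁻¹.mulVec B) ^ 2
    let ωstar : Fin m → ℝ :=
      D⁻¹ • ((1 + B ⬝ᵥ V⁻¹.mulVec B) • V⁻¹.mulVec one - (one ⬝ᵥ V⁻¹.mulVec B) • V⁻¹.mulVec B)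
    (ωstar ⬝ᵥ B) ^ 2 + ωstar ⬝ᵥ V.mulVec ωstar = (1 + B ⬝ᵥ V⁻¹.mulVec B) / D :=
  amse_optimal_weight_eq B (isHermitian_iff_isSymm.1 hV.isHermitian)
    (isUnit_iff_ne_zero.2 hV.det_pos.ne')

/-- the minimal value of the constrained AMSE at the AMSE-optimal weights
`ω*` equals `(1 + BᵀV⁻¹B) / [(1 + BᵀV⁻¹B)(1ᵀV⁻¹1) − (1ᵀV⁻¹B)²]`. -/
theorem stmt_2 (m : ℕ) (hm : 0 < m) (V : Matrix (Fin m) (Fin m) ℝ) (hV : V.PosDef)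
    (B : Fin m → ℝ) :
    let one : Fin m → ℝ := fun _ => 1
    let D : ℝ := (1 + B ⬝ᵥ V⁻¹.mulVec B) * (one ⬝ᵥ V⁻¹.mulVec one) - (one ⬝ᵥ V⁻¹.mulVec B) ^ 2
    let ωstar : Fin m → ℝ :=
      D⁻¹ • ((1 + B ⬝ᵥ V⁻¹.mulVec B) • V⁻¹.mulVec one - (one ⬝ᵥ V⁻¹.mulVec B) • V⁻¹.mulVec B)
    (ωstar ⬝ᵥ B) ^ 2 + ωstar ⬝ᵥ V.mulVec ωstar = (1 + B ⬝ᵥ V⁻¹.mulVec B) / D :=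
  stmt_2_general m V hV B
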